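/- arXiv:1609.08483 — 4 statements merged into one kernel-verified Lean document; each statement's English description precedes it below -/
import Mathlib

section
/- Let d ≥ 3 be an integer. There exists a constant C > 0, depending only on d, such that for every smooth compactly supported function u : ℝ → ℝ and every r ∈ ℝ one has |u(r)|² ≤ C·⟨r⟩^{2−d}·∫_ℝ |u'(ρ)|²·⟨ρ⟩^{d−1} dρ, where ⟨r⟩ = (r²+1)^{1/2}. -/
/-!
For `r ≥ 0` write `u r = -∫_r^∞ u'`. Cauchy–Schwarz with the weights `⟨ρ⟩^{±(d-1)}` bounds `|u r|²`
by the weighted energy times `∫_r^∞ ⟨ρ⟩^{1-d} ≤ ⟨r⟩^{3-d} ∫_r^∞ dρ / (1 + ρ²)`, and the last integral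
is `π/2 - arctan r = arcsin ⟨r⟩⁻¹ ≤ (π/2) ⟨r⟩⁻¹` by Jordan's inequality. Negative `r` follows by
reflecting `u`.
-/

open MeasureTheory Real Set Filter

theorem pi_div_two_sub_arctan_le {r : ℝ} (hr : 0 ≤ r) :
    π / 2 - arctan r ≤ π / 2 / √(1 + r ^ 2) := by
  rw [arctan_eq_arccos hr, ← arcsin_eq_pi_div_two_sub_arccos]
  set y := (√(1 + r ^ 2))⁻¹
  have hy : 0 ≤ y := by positivity
  have hy1 : y ≤ 1 := inv_le_one_of_one_le₀ (one_le_sqrt.2 (by nlinarith))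
  have hJordan : 2 / π * arcsin y ≤ y := by
    simpa only [sin_arcsin (by linarith) hy1] using
      mul_le_sin (arcsin_nonneg.2 hy) (arcsin_le_pi_div_two y)
  rw [div_eq_mul_inv (π / 2)]
  have := pi_pos
  calc arcsin y = π / 2 * (2 / π * arcsin y) := by field_simp
    _ ≤ π / 2 * y := by gcongr

theorem integrable_rpow_neg_sq_add_one {s : ℝ} (hs : 1 / 2 < s) :
    Integrable fun ρ : ℝ => (ρ ^ 2 + 1) ^ (-s) := by
  have := integrable_rpow_neg_one_add_norm_sq (E := ℝ) (μ := volume) (r := 2 * s)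
    (by rw [Module.finrank_self, Nat.cast_one]; linarith)
  simpa [add_comm, show -(2 * s) / 2 = -s by ring] using this

theorem setIntegral_Ioi_rpow_neg_sq_add_one_le {s r : ℝ} (hs : 1 ≤ s) (hr : 0 ≤ r) :
    ∫ ρ in Ioi r, (ρ ^ 2 + 1) ^ (-s) ≤ π / 2 * (r ^ 2 + 1) ^ (1 / 2 - s) := by
  have hr1 : (0 : ℝ) < r ^ 2 + 1 := by positivity
  have hdom : ∀ ρ ∈ Ioi r, (ρ ^ 2 + 1) ^ (-s) ≤ (r ^ 2 + 1) ^ (1 - s) * (1 + ρ ^ 2)⁻¹ := by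
    intro ρ hρ
    have hρ1 : (0 : ℝ) < ρ ^ 2 + 1 := by positivity
    calc (ρ ^ 2 + 1) ^ (-s) = (ρ ^ 2 + 1) ^ (1 - s) * (ρ ^ 2 + 1) ^ (-1 : ℝ) := by
          rw [← rpow_add hρ1]; ring_nf
      _ ≤ (r ^ 2 + 1) ^ (1 - s) * (1 + ρ ^ 2)⁻¹ := by
          rw [rpow_neg_one, add_comm (ρ ^ 2)]
          exact mul_le_mul_of_nonneg_right
            (rpow_le_rpow_of_nonpos hr1 (by nlinarith [hρ.out]) (by linarith)) (by positivity)
  calc ∫ ρ in Ioi r, (ρ ^ 2 + 1) ^ (-s)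
      ≤ ∫ ρ in Ioi r, (r ^ 2 + 1) ^ (1 - s) * (1 + ρ ^ 2)⁻¹ :=
        setIntegral_mono_on (integrable_rpow_neg_sq_add_one (by linarith)).integrableOn
          (integrable_inv_one_add_sq.const_mul _).integrableOn measurableSet_Ioi hdom
    _ = (r ^ 2 + 1) ^ (1 - s) * (π / 2 - arctan r) := by
        rw [integral_const_mul, integral_Ioi_inv_one_add_sq]
    _ ≤ (r ^ 2 + 1) ^ (1 - s) * (π / 2 / √(1 + r ^ 2)) := by
        gcongr; exact pi_div_two_sub_arctan_le hr
    _ = π / 2 * (r ^ 2 + 1) ^ (1 / 2 - s) := by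
        rw [add_comm 1, sqrt_eq_rpow, mul_div, mul_comm, mul_div_assoc, ← rpow_sub hr1]
        ring_nf

section CauchySchwarz

variable {α : Type*} [MeasurableSpace α] {μ : Measure α}

theorem sq_integral_mul_le_integral_sq_mul_integral_sq {f g : α → ℝ} (hf : 0 ≤ f) (hg : 0 ≤ g)
    (hf2 : MemLp f 2 μ) (hg2 : MemLp g 2 μ) :
    (∫ x, f x * g x ∂μ) ^ 2 ≤ (∫ x, f x ^ 2 ∂μ) * ∫ x, g x ^ 2 ∂μ := by
  have hHolder := integral_mul_le_Lp_mul_Lq_of_nonneg HolderConjugate.two_two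
    (Eventually.of_forall hf) (Eventually.of_forall hg)
    (by rwa [ENNReal.ofReal_ofNat]) (by rwa [ENNReal.ofReal_ofNat])
  simp only [rpow_two] at hHolder
  have hF : 0 ≤ ∫ x, f x ^ 2 ∂μ := integral_nonneg fun x => sq_nonneg _
  have hG : 0 ≤ ∫ x, g x ^ 2 ∂μ := integral_nonneg fun x => sq_nonneg _
  calc (∫ x, f x * g x ∂μ) ^ 2
      ≤ ((∫ x, f x ^ 2 ∂μ) ^ (1 / 2 : ℝ) * (∫ x, g x ^ 2 ∂μ) ^ (1 / 2 : ℝ)) ^ 2 :=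
        pow_le_pow_left₀ (integral_nonneg fun x => mul_nonneg (hf x) (hg x)) hHolder 2
    _ = (∫ x, f x ^ 2 ∂μ) * ∫ x, g x ^ 2 ∂μ := by
        rw [mul_pow, ← sqrt_eq_rpow, ← sqrt_eq_rpow, sq_sqrt hF, sq_sqrt hG]

theorem sq_integral_abs_le_integral_sq_mul_mul_integral_inv {f w : α → ℝ} (hw : ∀ x, 0 < w x)
    (hfw : Integrable (fun x => f x ^ 2 * w x) μ) (hw' : Integrable (fun x => (w x)⁻¹) μ) :
    (∫ x, |f x| ∂μ) ^ 2 ≤ (∫ x, f x ^ 2 * w x ∂μ) * ∫ x, (w x)⁻¹ ∂μ := by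
  have hsq_sqrt {h : α → ℝ} (h0 : ∀ x, 0 ≤ h x) : (fun x => √(h x) ^ 2) = h :=
    funext fun x => sq_sqrt (h0 x)
  have hmemLp {h : α → ℝ} (h0 : ∀ x, 0 ≤ h x) (hh : Integrable h μ) :
      MemLp (fun x => √(h x)) 2 μ := by
    refine (memLp_two_iff_integrable_sq
      (continuous_sqrt.comp_aestronglyMeasurable hh.aestronglyMeasurable)).2 ?_
    rwa [hsq_sqrt h0]
  have hfw0 : ∀ x, 0 ≤ f x ^ 2 * w x := fun x => mul_nonneg (sq_nonneg _) (hw x).le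
  have hw0 : ∀ x, 0 ≤ (w x)⁻¹ := fun x => (inv_pos.2 (hw x)).le
  have hprod : ∀ x, √(f x ^ 2 * w x) * √((w x)⁻¹) = |f x| := fun x => by
    rw [← sqrt_mul (hfw0 x), mul_inv_cancel_right₀ (hw x).ne', sqrt_sq_eq_abs]
  have := sq_integral_mul_le_integral_sq_mul_integral_sq (μ := μ) (fun x => sqrt_nonneg _)
    (fun x => sqrt_nonneg _) (hmemLp hfw0 hfw) (hmemLp hw0 hw')
  simpa only [hprod, hsq_sqrt hfw0, hsq_sqrt hw0] using this

end CauchySchwarz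

theorem abs_le_setIntegral_Ioi_abs_deriv {u : ℝ → ℝ} (hu : ContDiff ℝ 1 u)
    (hc : HasCompactSupport u) (r : ℝ) : |u r| ≤ ∫ ρ in Ioi r, |deriv u ρ| := by
  have hFTC : ∫ ρ in Ioi r, deriv u ρ = 0 - u r :=
    integral_Ioi_of_hasDerivAt_of_tendsto' (fun x _ => (hu.differentiable one_ne_zero x).hasDerivAt)
      (hu.continuous_deriv le_rfl |>.integrable_of_hasCompactSupport hc.deriv).integrableOn
      (hc.is_zero_at_infty.mono_left atTop_le_cocompact)
  calc |u r| = ‖∫ ρ in Ioi r, deriv u ρ‖ := by rw [hFTC, zero_sub, norm_neg, norm_eq_abs]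
    _ ≤ ∫ ρ in Ioi r, |deriv u ρ| := norm_integral_le_integral_norm _

theorem integrable_deriv_sq_mul_rpow_sq_add_one {u : ℝ → ℝ} (hu : ContDiff ℝ 1 u)
    (hc : HasCompactSupport u) (s : ℝ) :
    Integrable fun ρ => deriv u ρ ^ 2 * (ρ ^ 2 + 1) ^ s :=
  (((hu.continuous_deriv le_rfl).pow 2).mul
    ((by fun_prop : Continuous fun ρ : ℝ => ρ ^ 2 + 1).rpow_const fun ρ => Or.inl (by positivity))
    ).integrable_of_hasCompactSupport
    ((hc.deriv.comp_left (g := fun t => t ^ 2) (zero_pow two_ne_zero)).mul_right)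

theorem sq_abs_le_mul_integral_deriv_sq_mul_of_nonneg {s : ℝ} (hs : 1 ≤ s) {u : ℝ → ℝ}
    (hu : ContDiff ℝ 1 u) (hc : HasCompactSupport u) {r : ℝ} (hr : 0 ≤ r) :
    |u r| ^ 2 ≤ π / 2 * (r ^ 2 + 1) ^ (1 / 2 - s) *
      ∫ ρ, deriv u ρ ^ 2 * (ρ ^ 2 + 1) ^ s := by
  have hweight : ∀ ρ : ℝ, ((ρ ^ 2 + 1) ^ s)⁻¹ = (ρ ^ 2 + 1) ^ (-s) := fun ρ =>
    (rpow_neg (by positivity) s).symm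
  have henergy := integrable_deriv_sq_mul_rpow_sq_add_one hu hc s
  have hCS := sq_integral_abs_le_integral_sq_mul_mul_integral_inv (μ := volume.restrict (Ioi r))
    (f := deriv u) (fun ρ => rpow_pos_of_pos (by positivity) s) henergy.integrableOn
    (by simp only [hweight]; exact (integrable_rpow_neg_sq_add_one (by linarith)).integrableOn)
  simp only [hweight] at hCS
  calc |u r| ^ 2 ≤ (∫ ρ in Ioi r, |deriv u ρ|) ^ 2 :=
        pow_le_pow_left₀ (abs_nonneg _) (abs_le_setIntegral_Ioi_abs_deriv hu hc r) 2
    _ ≤ (∫ ρ in Ioi r, deriv u ρ ^ 2 * (ρ ^ 2 + 1) ^ s) * ∫ ρ in Ioi r, (ρ ^ 2 + 1) ^ (-s) := hCS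
    _ ≤ (∫ ρ, deriv u ρ ^ 2 * (ρ ^ 2 + 1) ^ s) * (π / 2 * (r ^ 2 + 1) ^ (1 / 2 - s)) := by
        refine mul_le_mul ?_ (setIntegral_Ioi_rpow_neg_sq_add_one_le hs hr)
          (setIntegral_nonneg measurableSet_Ioi fun ρ _ => by positivity)
          (integral_nonneg fun ρ => by positivity)
        exact setIntegral_le_integral henergy (Eventually.of_forall fun ρ => by positivity)
    _ = _ := by ring

theorem integral_deriv_comp_neg_sq_mul {u w : ℝ → ℝ} (hw : ∀ ρ, w (-ρ) = w ρ) :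
    ∫ ρ, deriv (fun x => u (-x)) ρ ^ 2 * w ρ = ∫ ρ, deriv u ρ ^ 2 * w ρ := by
  calc ∫ ρ, deriv (fun x => u (-x)) ρ ^ 2 * w ρ = ∫ ρ, deriv u (-ρ) ^ 2 * w (-ρ) := by
        simp only [deriv_comp_neg, neg_sq, hw]
    _ = ∫ ρ, deriv u ρ ^ 2 * w ρ := integral_neg_eq_self (fun ρ => deriv u ρ ^ 2 * w ρ) volume

theorem sq_abs_le_mul_integral_deriv_sq_mul {s : ℝ} (hs : 1 ≤ s) {u : ℝ → ℝ}
    (hu : ContDiff ℝ 1 u) (hc : HasCompactSupport u) (r : ℝ) :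
    |u r| ^ 2 ≤ π / 2 * (r ^ 2 + 1) ^ (1 / 2 - s) *
      ∫ ρ, deriv u ρ ^ 2 * (ρ ^ 2 + 1) ^ s := by
  rcases le_total 0 r with hr | hr
  · exact sq_abs_le_mul_integral_deriv_sq_mul_of_nonneg hs hu hc hr
  · have := sq_abs_le_mul_integral_deriv_sq_mul_of_nonneg hs
      (u := fun x => u (-x)) (hu.comp contDiff_neg) (hc.comp_homeomorph (Homeomorph.neg ℝ))
      (neg_nonneg.2 hr)
    rwa [integral_deriv_comp_neg_sq_mul fun ρ => by rw [neg_sq], neg_sq, neg_neg] at this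

/-- Strauss estimate on the d-dimensional wormhole: for smooth compactly supported radial `u`,
`|u(r)|² ≤ C ⟨r⟩^{2−d} ∫ |u'|² ⟨ρ⟩^{d−1} dρ`, where `⟨r⟩ = (r²+1)^{1/2}`. -/
theorem stmt3 (d : ℕ) (hd : 3 ≤ d) :
    ∃ C : ℝ, 0 < C ∧
      ∀ u : ℝ → ℝ, ContDiff ℝ (⊤ : ℕ∞) u → HasCompactSupport u → ∀ r : ℝ,
        |u r| ^ 2 ≤ C * (r ^ 2 + 1) ^ (((2 : ℝ) - (d : ℝ)) / 2) *
          ∫ ρ : ℝ, (deriv u ρ) ^ 2 * (ρ ^ 2 + 1) ^ (((d : ℝ) - 1) / 2) := by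
  refine ⟨π / 2, by positivity, fun u hu hc r => ?_⟩
  have hs : 1 ≤ ((d : ℝ) - 1) / 2 := by
    have : (3 : ℝ) ≤ d := mod_cast hd
    linarith
  have := sq_abs_le_mul_integral_deriv_sq_mul hs (hu.of_le (mod_cast le_top)) hc r
  rwa [show 1 / 2 - ((d : ℝ) - 1) / 2 = (2 - d) / 2 by ring] at this
end

section
/- Let d ≥ 3 be an integer. There exists a constant C > 0, depending only on d, such that for every smooth compactly supported function u : ℝ → ℝ one has ∫_ℝ |u(r)|²·⟨r⟩^{d−3} dr ≤ C·∫_ℝ |u'(r)|²·⟨r⟩^{d−1} dr, where ⟨r⟩ = (r²+1)^{1/2}. -/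
open MeasureTheory Real

/-!
With `⟨r⟩^{d-3} = (r² + 1)^p`, `p = (d - 3)/2 ≥ 0`, put `g r = r (r² + 1)^p`. Then `g'` dominates
the weight `(r² + 1)^p`, so integrating `(u² g)'` over the line gives
`∫ u² (r² + 1)^p ≤ ∫ u² g' = -2 ∫ u u' g`; since `g² ≤ (r² + 1)^p (r² + 1)^(p+1)`, AM-GM absorbs
half of the left-hand side into the cross term, leaving the constant `4`.
-/

lemma neg_two_mul_mul_le_of_sq_le {a b c w W : ℝ} (hw : 0 ≤ w) (hW : 0 ≤ W)
    (hc : c ^ 2 ≤ w * W) : -(2 * a * b * c) ≤ a ^ 2 * w / 2 + 2 * b ^ 2 * W := by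
  rcases hw.eq_or_lt with rfl | hw
  · have : c = 0 := by nlinarith [sq_nonneg c]
    subst this; nlinarith [mul_nonneg (sq_nonneg b) hW]
  · -- multiplied by `w`, the difference is `(a w + 2 b c)² / 2 + 2 b² (w W - c²)`
    refine le_of_mul_le_mul_left ?_ hw
    nlinarith [sq_nonneg (a * w + 2 * b * c), mul_nonneg (sq_nonneg b) (sub_nonneg.2 hc)]

lemma HasCompactSupport.integrable_pow_mul {u f : ℝ → ℝ} (hsupp : HasCompactSupport u)
    (hu : Continuous u) (hf : Continuous f) {n : ℕ} (hn : n ≠ 0) :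
    Integrable fun x ↦ u x ^ n * f x :=
  ((hu.pow n).mul hf).integrable_of_hasCompactSupport <|
    hsupp.mono fun x hx h ↦ hx (by simp [h, hn])

theorem integral_sq_mul_le_four_mul_integral_deriv_sq_mul {u g g' w W : ℝ → ℝ}
    (hu : ContDiff ℝ 1 u) (hsupp : HasCompactSupport u) (hg : ∀ x, HasDerivAt g (g' x) x)
    (hg' : Continuous g') (hw : Continuous w) (hW : Continuous W) (hw_nonneg : ∀ x, 0 ≤ w x)
    (hW_nonneg : ∀ x, 0 ≤ W x) (hw_le : ∀ x, w x ≤ g' x) (hg_sq : ∀ x, g x ^ 2 ≤ w x * W x) :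
    ∫ x, u x ^ 2 * w x ≤ 4 * ∫ x, deriv u x ^ 2 * W x := by
  have hu_cont := hu.continuous
  have hu'_cont := hu.continuous_deriv le_rfl
  have hg_cont : Continuous g := continuous_iff_continuousAt.2 fun x ↦ (hg x).continuousAt
  have hint_w := hsupp.integrable_pow_mul hu_cont hw two_ne_zero
  have hint_W := hsupp.deriv.integrable_pow_mul hu'_cont hW two_ne_zero
  have hint_g' := hsupp.integrable_pow_mul hu_cont hg' two_ne_zero
  have hint_g := hsupp.integrable_pow_mul hu_cont hg_cont two_ne_zero
  have hint_cross : Integrable fun x ↦ 2 * u x * deriv u x * g x :=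
    ((continuous_const.mul hu_cont).mul hu'_cont |>.mul hg_cont).integrable_of_hasCompactSupport
      ((hsupp.mul_left (f := fun _ ↦ (2 : ℝ))).mul_right.mul_right)
  have hparts : ∫ x, u x ^ 2 * g' x = -∫ x, 2 * u x * deriv u x * g x :=
    integral_mul_deriv_eq_deriv_mul_of_integrable
      (fun x _ ↦ by simpa using ((hu.differentiable one_ne_zero x).hasDerivAt.fun_pow 2))
      (fun x _ ↦ hg x) hint_g' hint_cross hint_g
  have hweight : ∫ x, u x ^ 2 * w x ≤ ∫ x, u x ^ 2 * g' x :=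
    integral_mono hint_w hint_g' fun x ↦ mul_le_mul_of_nonneg_left (hw_le x) (sq_nonneg _)
  have hcross : -∫ x, 2 * u x * deriv u x * g x ≤
      (∫ x, u x ^ 2 * w x) / 2 + 2 * ∫ x, deriv u x ^ 2 * W x := calc
    -∫ x, 2 * u x * deriv u x * g x = ∫ x, -(2 * u x * deriv u x * g x) := (integral_neg _).symm
    _ ≤ ∫ x, (u x ^ 2 * w x / 2 + 2 * (deriv u x ^ 2 * W x)) :=
      integral_mono hint_cross.neg (hint_w.div_const 2 |>.add (hint_W.const_mul 2)) fun x ↦ by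
        simpa [mul_assoc] using
          neg_two_mul_mul_le_of_sq_le (a := u x) (b := deriv u x) (hw_nonneg x) (hW_nonneg x)
            (hg_sq x)
    _ = (∫ x, u x ^ 2 * w x) / 2 + 2 * ∫ x, deriv u x ^ 2 * W x := by
      rw [integral_add (hint_w.div_const 2) (hint_W.const_mul 2), integral_div, integral_const_mul]
  linarith

lemma hasDerivAt_mul_sq_add_one_rpow (p x : ℝ) :
    HasDerivAt (fun x ↦ x * (x ^ 2 + 1) ^ p)
      ((x ^ 2 + 1) ^ p + 2 * p * x ^ 2 * (x ^ 2 + 1) ^ (p - 1)) x := by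
  have hbase : HasDerivAt (fun x : ℝ ↦ x ^ 2 + 1) (2 * x) x := by
    simpa using (hasDerivAt_pow 2 x).add_const 1
  exact ((hasDerivAt_id' x).fun_mul
    (hbase.rpow_const (p := p) (Or.inl (by positivity)))).congr_deriv (by ring)

theorem integral_sq_mul_sq_add_one_rpow_le {p : ℝ} (hp : 0 ≤ p) {u : ℝ → ℝ}
    (hu : ContDiff ℝ 1 u) (hsupp : HasCompactSupport u) :
    ∫ x, u x ^ 2 * (x ^ 2 + 1) ^ p ≤ 4 * ∫ x, deriv u x ^ 2 * (x ^ 2 + 1) ^ (p + 1) := by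
  have hcont (q : ℝ) : Continuous fun x : ℝ ↦ (x ^ 2 + 1) ^ q :=
    (by fun_prop : Continuous fun x : ℝ ↦ x ^ 2 + 1).rpow_const fun x ↦ Or.inl (by positivity)
  refine integral_sq_mul_le_four_mul_integral_deriv_sq_mul hu hsupp
    (hasDerivAt_mul_sq_add_one_rpow p) (by fun_prop) (hcont p) (hcont (p + 1))
    (fun x ↦ by positivity) (fun x ↦ by positivity) (fun x ↦ ?_) (fun x ↦ ?_)
  · have : 0 ≤ 2 * p * x ^ 2 * (x ^ 2 + 1) ^ (p - 1) := by positivity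
    linarith
  · have hy : 0 ≤ (x ^ 2 + 1) ^ p := by positivity
    rw [rpow_add_one (by positivity)]
    nlinarith [mul_nonneg hy hy]

/-- Hardy inequality on the d-dimensional wormhole: for smooth compactly supported radial `u`,
`∫ |u|² ⟨r⟩^{d−3} dr ≤ C ∫ |u'|² ⟨r⟩^{d−1} dr`, where `⟨r⟩ = (r²+1)^{1/2}`. -/
theorem stmt4 (d : ℕ) (hd : 3 ≤ d) :
    ∃ C : ℝ, 0 < C ∧
      ∀ u : ℝ → ℝ, ContDiff ℝ (⊤ : ℕ∞) u → HasCompactSupport u →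
        (∫ r : ℝ, |u r| ^ 2 * (r ^ 2 + 1) ^ (((d : ℝ) - 3) / 2)) ≤
          C * ∫ r : ℝ, (deriv u r) ^ 2 * (r ^ 2 + 1) ^ (((d : ℝ) - 1) / 2) := by
  refine ⟨4, four_pos, fun u hu hsupp ↦ ?_⟩
  have hp : 0 ≤ ((d : ℝ) - 3) / 2 := by
    have : (3 : ℝ) ≤ d := by exact_mod_cast hd
    linarith
  have hexp : ((d : ℝ) - 1) / 2 = ((d : ℝ) - 3) / 2 + 1 := by ring
  simpa only [sq_abs, hexp] using
    integral_sq_mul_sq_add_one_rpow_le hp (hu.of_le (by exact_mod_cast le_top)) hsupp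
end

section
/- Let ℓ ≥ 1 be an integer and set d = 2ℓ+3. There exist constants c, C > 0, depending only on ℓ, such that for every smooth compactly supported function u : ℝ → ℝ, writing φ(r) = ⟨r⟩^ℓ·u(r), one has c·∫_ℝ |φ'(r)|²·⟨r⟩² dr ≤ ∫_ℝ |u'(r)|²·⟨r⟩^{d−1} dr ≤ C·∫_ℝ |φ'(r)|²·⟨r⟩² dr, where ⟨r⟩ = (r²+1)^{1/2}. -/
open MeasureTheory Real

/-!
Writing `φ = ⟨r⟩^ℓ u`, one has `⟨r⟩^ℓ u' = φ' - ℓ r ⟨r⟩⁻² φ`. Expanding the square and integrating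
the cross term by parts (`-2 ∫ r φ φ' = ∫ φ²`, from `∫ (r φ²)' = 0`) gives
`∫ u'² ⟨r⟩^{2ℓ+2} = ∫ φ'² ⟨r⟩² + ∫ (ℓ + ℓ² r² ⟨r⟩⁻²) φ²`.
The potential term is nonnegative, which gives the lower bound with `c = 1`, and it is at most
`(ℓ + ℓ²) ∫ φ²`; the one-dimensional Hardy inequality `∫ φ² ≤ 4 ∫ r² φ'²`, proved by the same
integration by parts, bounds this by `4 (ℓ + ℓ²) ∫ φ'² ⟨r⟩²`.
-/

section CompactSupport

variable {f g : ℝ → ℝ}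

theorem HasCompactSupport.integrable_of_eq_zero_of_eq_zero_of_deriv_eq_zero
    (hf : HasCompactSupport f) (hg : Continuous g)
    (hgf : ∀ x, f x = 0 → deriv f x = 0 → g x = 0) : Integrable g :=
  hg.integrable_of_hasCompactSupport <| hf.mono' <| Function.support_subset_iff'.2 fun _ hx =>
    hgf _ (image_eq_zero_of_notMem_tsupport hx)
      (Function.notMem_support.mp fun h => hx (support_deriv_subset h))

theorem integrable_sq_add_two_mul_deriv (hf : ContDiff ℝ 1 f) (hfc : HasCompactSupport f) :
    Integrable fun x => f x ^ 2 + 2 * x * f x * deriv f x := by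
  have hf' := hf.continuous_deriv le_rfl
  exact hfc.integrable_of_eq_zero_of_eq_zero_of_deriv_eq_zero (by fun_prop) fun x h _ => by simp [h]

theorem integral_sq_add_two_mul_deriv_eq_zero (hf : ContDiff ℝ 1 f) (hfc : HasCompactSupport f) :
    ∫ x, (f x ^ 2 + 2 * x * f x * deriv f x) = 0 := by
  refine integral_eq_zero_of_hasDerivAt_of_integrable (f := fun x => x * f x ^ 2)
    (fun x => ?_) (integrable_sq_add_two_mul_deriv hf hfc)
    (hfc.integrable_of_eq_zero_of_eq_zero_of_deriv_eq_zero (by fun_prop)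
      fun x h _ => by simp [h])
  have hd := (hf.differentiable one_ne_zero x).hasDerivAt
  refine ((hasDerivAt_id' x).fun_mul (hd.fun_pow 2)).congr_deriv ?_
  ring

theorem integral_sq_le_four_mul_integral_sq_mul_deriv_sq (hf : ContDiff ℝ 1 f)
    (hfc : HasCompactSupport f) :
    ∫ x, f x ^ 2 ≤ 4 * ∫ x, x ^ 2 * deriv f x ^ 2 := by
  have hf' := hf.continuous_deriv le_rfl
  have hf2 : Integrable fun x => f x ^ 2 :=
    hfc.integrable_of_eq_zero_of_eq_zero_of_deriv_eq_zero (by fun_prop) fun x h _ => by simp [h]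
  have hxd : Integrable fun x => 2 * (x ^ 2 * deriv f x ^ 2) :=
    hfc.integrable_of_eq_zero_of_eq_zero_of_deriv_eq_zero (by fun_prop) fun x _ h => by simp [h]
  have hrhs := hxd.fun_add (hf2.const_mul 2⁻¹)
  have hbound : ∫ x, f x ^ 2 ≤ ∫ x, ((f x ^ 2 + 2 * x * f x * deriv f x)
      + (2 * (x ^ 2 * deriv f x ^ 2) + 2⁻¹ * f x ^ 2)) := by
    refine integral_mono hf2 ((integrable_sq_add_two_mul_deriv hf hfc).add hrhs) fun x => ?_
    nlinarith [sq_nonneg (2 * x * deriv f x + f x)]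
  rw [integral_add (integrable_sq_add_two_mul_deriv hf hfc) hrhs,
    integral_add hxd (hf2.const_mul 2⁻¹), integral_const_mul, integral_const_mul,
    integral_sq_add_two_mul_deriv_eq_zero hf hfc] at hbound
  linarith

end CompactSupport

noncomputable def bracketPowMul (a : ℝ) (u : ℝ → ℝ) (s : ℝ) : ℝ := (s ^ 2 + 1) ^ (a / 2) * u s

section Bracket

variable {a : ℝ} {u : ℝ → ℝ}

theorem contDiff_sq_add_one_rpow {n : WithTop ℕ∞} (a : ℝ) :
    ContDiff ℝ n fun s : ℝ => (s ^ 2 + 1) ^ a :=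
  (contDiff_id.pow 2 |>.add contDiff_const).rpow_const_of_ne fun s => by positivity

theorem hasDerivAt_sq_add_one_rpow_half (a x : ℝ) :
    HasDerivAt (fun s : ℝ => (s ^ 2 + 1) ^ (a / 2))
      (a * x / (x ^ 2 + 1) * (x ^ 2 + 1) ^ (a / 2)) x := by
  have hx : x ^ 2 + 1 ≠ 0 := by positivity
  refine (((hasDerivAt_pow 2 x).add_const 1).rpow_const (Or.inl hx)).congr_deriv ?_
  rw [rpow_sub (by positivity), rpow_one]
  field_simp
  push_cast
  ring

theorem sq_add_one_rpow_half_sq (a x : ℝ) : ((x ^ 2 + 1) ^ (a / 2)) ^ 2 = (x ^ 2 + 1) ^ a := by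
  rw [← rpow_natCast, ← rpow_mul (by positivity)]
  norm_num

theorem contDiff_bracketPowMul {n : WithTop ℕ∞} (hu : ContDiff ℝ n u) :
    ContDiff ℝ n (bracketPowMul a u) :=
  (contDiff_sq_add_one_rpow _).mul hu

theorem HasCompactSupport.bracketPowMul (hu : HasCompactSupport u) :
    HasCompactSupport (bracketPowMul a u) :=
  hu.mul_left

theorem deriv_bracketPowMul {x : ℝ} (hu : DifferentiableAt ℝ u x) :
    deriv (bracketPowMul a u) x
      = a * x / (x ^ 2 + 1) * bracketPowMul a u x + (x ^ 2 + 1) ^ (a / 2) * deriv u x := by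
  refine ((hasDerivAt_sq_add_one_rpow_half a x).fun_mul hu.hasDerivAt).deriv.trans ?_
  rw [bracketPowMul]
  ring

end Bracket

section Energy

variable {a : ℝ} {u : ℝ → ℝ}

theorem deriv_sq_mul_rpow_eq {x : ℝ} (hu : DifferentiableAt ℝ u x) :
    deriv u x ^ 2 * (x ^ 2 + 1) ^ (a + 1)
      = deriv (bracketPowMul a u) x ^ 2 * (x ^ 2 + 1)
        + (a + a ^ 2 * x ^ 2 / (x ^ 2 + 1)) * bracketPowMul a u x ^ 2
        - a * (bracketPowMul a u x ^ 2
          + 2 * x * bracketPowMul a u x * deriv (bracketPowMul a u) x) := by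
  have hx : x ^ 2 + 1 ≠ 0 := by positivity
  rw [deriv_bracketPowMul hu, rpow_add_one hx, ← sq_add_one_rpow_half_sq, bracketPowMul]
  field_simp
  ring

theorem integral_deriv_sq_mul_rpow_eq (hu : ContDiff ℝ 1 u) (huc : HasCompactSupport u) :
    ∫ x, deriv u x ^ 2 * (x ^ 2 + 1) ^ (a + 1)
      = (∫ x, deriv (bracketPowMul a u) x ^ 2 * (x ^ 2 + 1))
        + ∫ x, (a + a ^ 2 * x ^ 2 / (x ^ 2 + 1)) * bracketPowMul a u x ^ 2 := by
  have hφ := contDiff_bracketPowMul (a := a) hu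
  have hφc := huc.bracketPowMul (a := a)
  have hφ' := hφ.continuous_deriv le_rfl
  have hkin : Integrable fun x => deriv (bracketPowMul a u) x ^ 2 * (x ^ 2 + 1) :=
    hφc.integrable_of_eq_zero_of_eq_zero_of_deriv_eq_zero (by fun_prop) fun x _ h => by simp [h]
  have hpot : Integrable fun x => (a + a ^ 2 * x ^ 2 / (x ^ 2 + 1)) * bracketPowMul a u x ^ 2 :=
    hφc.integrable_of_eq_zero_of_eq_zero_of_deriv_eq_zero
      (by fun_prop (disch := intro; positivity)) fun x h _ => by simp [h]
  simp_rw [deriv_sq_mul_rpow_eq ((hu.differentiable one_ne_zero) _)]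
  rw [integral_sub (hkin.fun_add hpot) ((integrable_sq_add_two_mul_deriv hφ hφc).const_mul a),
    integral_add hkin hpot, integral_const_mul, integral_sq_add_two_mul_deriv_eq_zero hφ hφc,
    mul_zero, sub_zero]

theorem integral_deriv_bracketPowMul_sq_mul_le (ha : 0 ≤ a) (hu : ContDiff ℝ 1 u)
    (huc : HasCompactSupport u) :
    ∫ x, deriv (bracketPowMul a u) x ^ 2 * (x ^ 2 + 1)
      ≤ ∫ x, deriv u x ^ 2 * (x ^ 2 + 1) ^ (a + 1) := by
  rw [integral_deriv_sq_mul_rpow_eq hu huc, le_add_iff_nonneg_right]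
  exact integral_nonneg fun x => by positivity

theorem integral_deriv_sq_mul_rpow_le (ha : 0 ≤ a) (hu : ContDiff ℝ 1 u)
    (huc : HasCompactSupport u) :
    ∫ x, deriv u x ^ 2 * (x ^ 2 + 1) ^ (a + 1)
      ≤ (1 + 4 * (a + a ^ 2)) * ∫ x, deriv (bracketPowMul a u) x ^ 2 * (x ^ 2 + 1) := by
  have hφ := contDiff_bracketPowMul (a := a) hu
  have hφc := huc.bracketPowMul (a := a)
  have hφ' := hφ.continuous_deriv le_rfl
  have hsq : Integrable fun x => bracketPowMul a u x ^ 2 :=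
    hφc.integrable_of_eq_zero_of_eq_zero_of_deriv_eq_zero (by fun_prop) fun x h _ => by simp [h]
  have hpot : ∫ x, (a + a ^ 2 * x ^ 2 / (x ^ 2 + 1)) * bracketPowMul a u x ^ 2
      ≤ (a + a ^ 2) * ∫ x, bracketPowMul a u x ^ 2 := by
    rw [← integral_const_mul]
    refine integral_mono_of_nonneg (ae_of_all _ fun x => by positivity) (hsq.const_mul _)
      (ae_of_all _ fun x => mul_le_mul_of_nonneg_right ?_ (sq_nonneg _))
    have : x ^ 2 / (x ^ 2 + 1) ≤ 1 := div_le_one_of_le₀ (by linarith) (by positivity)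
    rw [mul_div_assoc]
    nlinarith [sq_nonneg a]
  have hweight : ∫ x, x ^ 2 * deriv (bracketPowMul a u) x ^ 2
      ≤ ∫ x, deriv (bracketPowMul a u) x ^ 2 * (x ^ 2 + 1) :=
    integral_mono_of_nonneg (ae_of_all _ fun x => by positivity)
      (hφc.integrable_of_eq_zero_of_eq_zero_of_deriv_eq_zero (by fun_prop)
        fun x _ h => by simp [h])
      (ae_of_all _ fun x => by nlinarith [sq_nonneg (deriv (bracketPowMul a u) x)])
  have hardy := integral_sq_le_four_mul_integral_sq_mul_deriv_sq hφ hφc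
  have haa : 0 ≤ a + a ^ 2 := by positivity
  rw [integral_deriv_sq_mul_rpow_eq hu huc]
  nlinarith [mul_le_mul_of_nonneg_left hardy haa, mul_le_mul_of_nonneg_left hweight haa]

end Energy

theorem stmt5_general (ℓ : ℕ) :
    ∃ c C : ℝ, 0 < c ∧ 0 < C ∧
      ∀ u : ℝ → ℝ, ContDiff ℝ (⊤ : ℕ∞) u → HasCompactSupport u →
        (c * ∫ r : ℝ,
            (deriv (fun s : ℝ => (s ^ 2 + 1) ^ ((ℓ : ℝ) / 2) * u s) r) ^ 2 * (r ^ 2 + 1))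
          ≤ (∫ r : ℝ, (deriv u r) ^ 2 * (r ^ 2 + 1) ^ (ℓ + 1)) ∧
        (∫ r : ℝ, (deriv u r) ^ 2 * (r ^ 2 + 1) ^ (ℓ + 1))
          ≤ C * ∫ r : ℝ,
              (deriv (fun s : ℝ => (s ^ 2 + 1) ^ ((ℓ : ℝ) / 2) * u s) r) ^ 2 * (r ^ 2 + 1) := by
  refine ⟨1, 1 + 4 * (ℓ + ℓ ^ 2), one_pos, by positivity, fun u hu huc => ?_⟩
  have hu1 : ContDiff ℝ 1 u := hu.of_le (by exact_mod_cast le_top)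
  have hpow (x : ℝ) : (x ^ 2 + 1) ^ ((ℓ : ℝ) + 1) = (x ^ 2 + 1) ^ (ℓ + 1) := by
    exact_mod_cast rpow_natCast _ (ℓ + 1)
  simp_rw [← hpow, one_mul]
  exact ⟨integral_deriv_bracketPowMul_sq_mul_le ℓ.cast_nonneg hu1 huc,
    integral_deriv_sq_mul_rpow_le ℓ.cast_nonneg hu1 huc⟩

/-- Equivalence of the energy norm of `φ = ⟨r⟩^ℓ u` on the 3-dimensional wormhole
(weight `⟨r⟩² dr = (r²+1) dr`) with the `Ḣ¹` norm of `u` on the `d = 2ℓ+3`-dimensional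
wormhole (weight `⟨r⟩^{d−1} dr = (r²+1)^{ℓ+1} dr`). -/
theorem stmt5 (ℓ : ℕ) (hℓ : 1 ≤ ℓ) :
    ∃ c C : ℝ, 0 < c ∧ 0 < C ∧
      ∀ u : ℝ → ℝ, ContDiff ℝ (⊤ : ℕ∞) u → HasCompactSupport u →
        (c * ∫ r : ℝ,
            (deriv (fun s : ℝ => (s ^ 2 + 1) ^ ((ℓ : ℝ) / 2) * u s) r) ^ 2 * (r ^ 2 + 1))
          ≤ (∫ r : ℝ, (deriv u r) ^ 2 * (r ^ 2 + 1) ^ (ℓ + 1)) ∧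
        (∫ r : ℝ, (deriv u r) ^ 2 * (r ^ 2 + 1) ^ (ℓ + 1))
          ≤ C * ∫ r : ℝ,
              (deriv (fun s : ℝ => (s ^ 2 + 1) ^ ((ℓ : ℝ) / 2) * u s) r) ^ 2 * (r ^ 2 + 1) :=
  stmt5_general ℓ
end

section
/- Let d ≥ 7 be an integer, and set m₀ = 3d/(2d−5) and m₁ = d/(d−3). There exists a constant C > 0, depending only on d, such that for every smooth compactly supported function f : ℝ → ℝ and every r ∈ ℝ one has |f(r)| ≤ C·⟨r⟩^{−2(d−4)/3}·( ∫_ℝ |f'(ρ)|^{m₀}·⟨ρ⟩^{d−1} dρ )^{1/m₀} and |f(r)| ≤ C·⟨r⟩^{−(d−4)}·( ∫_ℝ |f'(ρ)|^{m₁}·⟨ρ⟩^{d−1} dρ )^{1/m₁}, where ⟨r⟩ = (r²+1)^{1/2}. -/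
/-!
For `r ≥ 0` write `f r = -∫_{(r,∞)} f'` (for `r < 0` use `(-∞, r]`) and apply Hölder with exponents
`p` and `q = p / (p - 1)` after splitting `|f'| = (|f'| ⟨ρ⟩^{2b/p}) ⟨ρ⟩^{-2b/p}`, where `⟨ρ⟩^{2b}`
is the weight `(ρ² + 1)^b`. The dual factor is a tail integral `∫_{|ρ| ≥ |r|} ⟨ρ⟩^{-2s}`,
`s = b / (p - 1)`, which is `≲ ⟨r⟩^{1 - 2s}` as soon as `s > 1/2`; this gives
`|f r| ≲ ⟨r⟩^{(p - 1 - 2b)/p} ‖f'‖_{L^p(⟨ρ⟩^{2b} dρ)}`. For `2b = d - 1` and `p = m₀, m₁` the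
exponent is `-2(d - 4)/3`, resp. `-(d - 4)`.
-/

open MeasureTheory Real Set Filter Topology

theorem integral_add_rpow_Ioi_of_lt {a c m : ℝ} (ha : a < -1) (hc : -m < c) :
    ∫ x in Ioi c, (x + m) ^ a = -(c + m) ^ (a + 1) / (a + 1) := by
  have hd : ∀ x ∈ Ici c, HasDerivAt (fun t ↦ (t + m) ^ (a + 1) / (a + 1)) ((x + m) ^ a) x := by
    intro x hx
    refine ((((hasDerivAt_id' x).add_const m).rpow_const
      (Or.inl (by linarith [mem_Ici.mp hx] : x + m ≠ 0))).div_const (a + 1)).congr_deriv ?_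
    rw [add_sub_cancel_right]
    field_simp [show a + 1 ≠ 0 by linarith]
  have ht : Tendsto (fun t ↦ (t + m) ^ (a + 1) / (a + 1)) atTop (𝓝 (0 / (a + 1))) := by
    rw [← neg_neg (a + 1)]
    exact (tendsto_rpow_neg_atTop (by linarith)).comp
      (tendsto_atTop_add_const_right _ m tendsto_id) |>.div_const _
  rw [integral_Ioi_of_hasDerivAt_of_tendsto' hd (integrableOn_add_rpow_Ioi_of_lt ha hc) ht]
  ring

lemma sq_add_one_rpow_neg_le {s x : ℝ} (hs : 0 ≤ s) (hx : 0 < x + 1) :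
    (x ^ 2 + 1) ^ (-s) ≤ 2 ^ s * (x + 1) ^ (-(2 * s)) := by
  have hsq : ((x + 1) ^ 2 / 2) ^ (-s) = 2 ^ s * (x + 1) ^ (-(2 * s)) := by
    rw [div_rpow (by positivity) zero_le_two, ← rpow_natCast, ← rpow_mul hx.le,
      rpow_neg zero_le_two, div_inv_eq_mul, mul_comm]
    push_cast; ring_nf
  have hle : (x + 1) ^ 2 / 2 ≤ x ^ 2 + 1 := by nlinarith [sq_nonneg (x - 1)]
  rw [← hsq]
  exact rpow_le_rpow_of_nonpos (by positivity) hle (by linarith)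

lemma integrable_sq_add_one_rpow_neg {s : ℝ} (hs : 1 / 2 < s) :
    Integrable (fun x : ℝ ↦ (x ^ 2 + 1) ^ (-s)) := by
  have := integrable_rpow_neg_one_add_norm_sq (E := ℝ) (μ := volume) (r := 2 * s)
    (by simp; linarith)
  convert this using 2 with x
  rw [Real.norm_eq_abs, sq_abs, add_comm]
  ring_nf

lemma setIntegral_Ioi_sq_add_one_rpow_neg_le {s r : ℝ} (hs : 1 / 2 < s) (hr : 0 ≤ r) :
    ∫ x in Ioi r, (x ^ 2 + 1) ^ (-s) ≤ 2 ^ s / (2 * s - 1) * (r ^ 2 + 1) ^ (1 / 2 - s) := by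
  have hcomp : ∫ x in Ioi r, (x ^ 2 + 1) ^ (-s) ≤ ∫ x in Ioi r, 2 ^ s * (x + 1) ^ (-(2 * s)) :=
    setIntegral_mono_on (integrable_sq_add_one_rpow_neg hs).integrableOn
      ((integrableOn_add_rpow_Ioi_of_lt (by linarith) (by linarith)).const_mul _)
      measurableSet_Ioi fun x hx ↦
        sq_add_one_rpow_neg_le (by linarith) (by linarith [mem_Ioi.mp hx])
  have hval : ∫ x in Ioi r, 2 ^ s * (x + 1) ^ (-(2 * s))
      = 2 ^ s / (2 * s - 1) * ((r + 1) ^ 2) ^ (1 / 2 - s) := by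
    rw [integral_const_mul, integral_add_rpow_Ioi_of_lt (by linarith) (by linarith),
      ← rpow_natCast, ← rpow_mul (by linarith), show -(2 * s) + 1 = -(2 * s - 1) by ring,
      show ((2 : ℕ) : ℝ) * (1 / 2 - s) = -(2 * s - 1) by push_cast; ring, div_neg]
    ring
  calc ∫ x in Ioi r, (x ^ 2 + 1) ^ (-s)
      ≤ 2 ^ s / (2 * s - 1) * ((r + 1) ^ 2) ^ (1 / 2 - s) := hval ▸ hcomp
    _ ≤ 2 ^ s / (2 * s - 1) * (r ^ 2 + 1) ^ (1 / 2 - s) := by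
      gcongr ?_ * ?_
      · exact div_nonneg (by positivity) (by linarith)
      exact rpow_le_rpow_of_nonpos (by positivity) (by nlinarith) (by linarith)

lemma setIntegral_Iic_sq_add_one_rpow_neg_le {s r : ℝ} (hs : 1 / 2 < s) (hr : r ≤ 0) :
    ∫ x in Iic r, (x ^ 2 + 1) ^ (-s) ≤ 2 ^ s / (2 * s - 1) * (r ^ 2 + 1) ^ (1 / 2 - s) := by
  have := setIntegral_Ioi_sq_add_one_rpow_neg_le hs (neg_nonneg.2 hr)
  rw [← integral_comp_neg_Iic] at this
  simpa only [neg_sq] using this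

lemma HasCompactSupport.abs_le_setIntegral_Ioi_abs_deriv {f : ℝ → ℝ} (hf : ContDiff ℝ 1 f)
    (h2f : HasCompactSupport f) (r : ℝ) : |f r| ≤ ∫ x in Ioi r, |deriv f x| := by
  rw [← abs_neg, ← h2f.integral_Ioi_deriv_eq hf r]
  exact abs_integral_le_integral_abs

lemma HasCompactSupport.abs_le_setIntegral_Iic_abs_deriv {f : ℝ → ℝ} (hf : ContDiff ℝ 1 f)
    (h2f : HasCompactSupport f) (r : ℝ) : |f r| ≤ ∫ x in Iic r, |deriv f x| := by
  rw [← h2f.integral_Iic_deriv_eq hf r]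
  exact abs_integral_le_integral_abs

theorem setIntegral_abs_le_weighted_Lp {α : Type*} [MeasurableSpace α] {μ : Measure α}
    {p q : ℝ} (hpq : p.HolderConjugate q) {g ω : α → ℝ} (hg : Measurable g) (hω : Measurable ω)
    (hω_pos : ∀ x, 0 < ω x) (hgω : Integrable (fun x ↦ |g x| ^ p * ω x) μ) {S : Set α}
    (hωS : IntegrableOn (fun x ↦ ω x ^ (-(q / p))) S μ) :
    ∫ x in S, |g x| ∂μ ≤
      (∫ x, |g x| ^ p * ω x ∂μ) ^ (1 / p) * (∫ x in S, ω x ^ (-(q / p)) ∂μ) ^ (1 / q) := by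
  have hω0 x : 0 ≤ ω x := (hω_pos x).le
  have hp := hpq.pos
  have hq := hpq.symm.pos
  set u : α → ℝ := fun x ↦ |g x| * ω x ^ (1 / p)
  set v : α → ℝ := fun x ↦ ω x ^ (-(1 / p))
  have hu0 x : 0 ≤ u x := mul_nonneg (abs_nonneg _) (rpow_nonneg (hω0 x) _)
  have hv0 x : 0 ≤ v x := rpow_nonneg (hω0 x) _
  have huv : ∀ x, u x * v x = |g x| := fun x ↦ by
    rw [mul_assoc, ← rpow_add (hω_pos x), add_neg_cancel, rpow_zero, mul_one]
  have hup : ∀ x, u x ^ p = |g x| ^ p * ω x := fun x ↦ by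
    rw [mul_rpow (abs_nonneg _) (rpow_nonneg (hω_pos x).le _), ← rpow_mul (hω_pos x).le,
      one_div_mul_cancel hp.ne', rpow_one]
  have hvq : ∀ x, v x ^ q = ω x ^ (-(q / p)) := fun x ↦ by
    rw [← rpow_mul (hω_pos x).le]
    ring_nf
  have memLp_of_rpow {h : α → ℝ} {t : ℝ} (ht : 0 < t) (hh : Measurable h) (h0 : ∀ x, 0 ≤ h x)
      (hi : IntegrableOn (fun x ↦ h x ^ t) S μ) : MemLp h (ENNReal.ofReal t) (μ.restrict S) := by
    refine (integrable_norm_rpow_iff hh.aestronglyMeasurable (by simpa using ht)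
      ENNReal.ofReal_ne_top).1 ?_
    simp only [ENNReal.toReal_ofReal ht.le, norm_of_nonneg (h0 _)]
    exact hi
  have hu : MemLp u (ENNReal.ofReal p) (μ.restrict S) :=
    memLp_of_rpow hp (by fun_prop) hu0 (by simpa only [hup] using hgω.integrableOn)
  have hv : MemLp v (ENNReal.ofReal q) (μ.restrict S) :=
    memLp_of_rpow hq (by fun_prop) hv0 (by simpa only [hvq] using hωS)
  calc ∫ x in S, |g x| ∂μ = ∫ x in S, u x * v x ∂μ := by simp only [huv]
    _ ≤ (∫ x in S, u x ^ p ∂μ) ^ (1 / p) * (∫ x in S, v x ^ q ∂μ) ^ (1 / q) :=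
      integral_mul_le_Lp_mul_Lq_of_nonneg hpq (.of_forall hu0) (.of_forall hv0) hu hv
    _ ≤ (∫ x, |g x| ^ p * ω x ∂μ) ^ (1 / p) * (∫ x in S, ω x ^ (-(q / p)) ∂μ) ^ (1 / q) := by
      have hgω0 : 0 ≤ fun x ↦ |g x| ^ p * ω x := fun x ↦ mul_nonneg (by positivity) (hω0 x)
      simp only [hup, hvq]
      refine mul_le_mul_of_nonneg_right (rpow_le_rpow (integral_nonneg hgω0)
        (setIntegral_le_integral hgω (.of_forall hgω0)) (by positivity))
        (rpow_nonneg (integral_nonneg fun x ↦ rpow_nonneg (hω0 x) _) _)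

theorem exists_weighted_Linfty_bound_of_deriv {p b : ℝ} (hp : 1 < p) (hb : (p - 1) / 2 < b) :
    ∃ C : ℝ, 0 < C ∧ ∀ f : ℝ → ℝ, ContDiff ℝ 1 f → HasCompactSupport f → ∀ r : ℝ,
      |f r| ≤ C * (r ^ 2 + 1) ^ ((p - 1 - 2 * b) / (2 * p)) *
        (∫ ρ, |deriv f ρ| ^ p * (ρ ^ 2 + 1) ^ b) ^ (1 / p) := by
  set q := p.conjExponent
  have hpq : p.HolderConjugate q := .conjExponent hp
  set s := b * (q / p)
  have hs : 1 / 2 < s := by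
    have : s = b / (p - 1) := by
      simp only [s, q, Real.conjExponent]; field_simp
    rw [this, lt_div_iff₀ (by linarith)]; linarith
  have hexp : (1 / 2 - s) * (1 / q) = (p - 1 - 2 * b) / (2 * p) := by
    simp only [s, q, Real.conjExponent]
    field_simp [show p - 1 ≠ 0 by linarith]
  set K : ℝ := 2 ^ s / (2 * s - 1)
  have hK : 0 < K := div_pos (by positivity) (by linarith)
  refine ⟨K ^ (1 / q), by positivity, fun f hf h2f r ↦ ?_⟩
  have hweight (x : ℝ) : ((x ^ 2 + 1) ^ b) ^ (-(q / p)) = (x ^ 2 + 1) ^ (-s) := by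
    rw [← rpow_mul (by positivity), mul_neg]
  obtain ⟨S, hfS, hS⟩ : ∃ S : Set ℝ, |f r| ≤ ∫ x in S, |deriv f x| ∧
      ∫ x in S, (x ^ 2 + 1) ^ (-s) ≤ K * (r ^ 2 + 1) ^ (1 / 2 - s) := by
    rcases le_or_gt 0 r with hr | hr
    · exact ⟨Ioi r, h2f.abs_le_setIntegral_Ioi_abs_deriv hf r,
        setIntegral_Ioi_sq_add_one_rpow_neg_le hs hr⟩
    · exact ⟨Iic r, h2f.abs_le_setIntegral_Iic_abs_deriv hf r,
        setIntegral_Iic_sq_add_one_rpow_neg_le hs hr.le⟩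
  have hint : Integrable (fun x ↦ |deriv f x| ^ p * (x ^ 2 + 1) ^ b) := by
    have hf' : Continuous (deriv f) := hf.continuous_deriv le_rfl
    have hw : Continuous fun x : ℝ ↦ (x ^ 2 + 1) ^ b :=
      (continuous_pow 2 |>.add continuous_const).rpow_const
        fun x ↦ Or.inl (by positivity : x ^ 2 + 1 ≠ 0)
    have hg : Continuous fun x ↦ |deriv f x| ^ p := hf'.abs.rpow_const fun _ ↦ Or.inr (by linarith)
    refine (hg.mul hw).integrable_of_hasCompactSupport ?_
    exact (h2f.deriv.comp_left (g := fun t ↦ |t| ^ p)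
      (by simp [zero_rpow (by linarith : p ≠ 0)])).mul_right
  have holder := setIntegral_abs_le_weighted_Lp hpq (measurable_deriv f) (by fun_prop)
    (fun x ↦ by positivity) hint (S := S)
    (by simpa only [hweight] using (integrable_sq_add_one_rpow_neg hs).integrableOn)
  simp only [hweight] at holder
  calc |f r| ≤ _ := hfS.trans holder
    _ ≤ (∫ ρ, |deriv f ρ| ^ p * (ρ ^ 2 + 1) ^ b) ^ (1 / p) *
        (K * (r ^ 2 + 1) ^ (1 / 2 - s)) ^ (1 / q) := by
      gcongr
      exact one_div_nonneg.2 hpq.symm.nonneg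
    _ = _ := by
      rw [mul_rpow hK.le (by positivity), ← rpow_mul (by positivity), hexp]
      ring

/-- Weighted `L^∞` embeddings on the d-dimensional wormhole, `d ≥ 7`:
`|f(r)| ≤ C ⟨r⟩^{−2(d−4)/3} ‖f'‖_{L^{m₀}(⟨ρ⟩^{d−1}dρ)}` with `m₀ = 3d/(2d−5)`, and
`|f(r)| ≤ C ⟨r⟩^{−(d−4)} ‖f'‖_{L^{m₁}(⟨ρ⟩^{d−1}dρ)}` with `m₁ = d/(d−3)`. -/
theorem stmt6 (d : ℕ) (hd : 7 ≤ d) :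
    ∃ C : ℝ, 0 < C ∧
      ∀ f : ℝ → ℝ, ContDiff ℝ (⊤ : ℕ∞) f → HasCompactSupport f → ∀ r : ℝ,
        (|f r| ≤ C * (r ^ 2 + 1) ^ (-((d : ℝ) - 4) / 3) *
          (∫ ρ : ℝ, |deriv f ρ| ^ (3 * (d : ℝ) / (2 * (d : ℝ) - 5))
              * (ρ ^ 2 + 1) ^ (((d : ℝ) - 1) / 2)) ^ ((2 * (d : ℝ) - 5) / (3 * (d : ℝ)))) ∧
        (|f r| ≤ C * (r ^ 2 + 1) ^ (-((d : ℝ) - 4) / 2) *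
          (∫ ρ : ℝ, |deriv f ρ| ^ ((d : ℝ) / ((d : ℝ) - 3))
              * (ρ ^ 2 + 1) ^ (((d : ℝ) - 1) / 2)) ^ (((d : ℝ) - 3) / (d : ℝ))) := by
  have hd : (7 : ℝ) ≤ d := mod_cast hd
  obtain ⟨C₀, hC₀, H₀⟩ := exists_weighted_Linfty_bound_of_deriv
    (p := 3 * (d : ℝ) / (2 * d - 5)) (b := ((d : ℝ) - 1) / 2)
    (by rw [one_lt_div (by linarith)]; linarith)
    (by rw [div_sub_one (by linarith), div_div, div_lt_iff₀ (by linarith)]; nlinarith)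
  obtain ⟨C₁, -, H₁⟩ := exists_weighted_Linfty_bound_of_deriv
    (p := (d : ℝ) / (d - 3)) (b := ((d : ℝ) - 1) / 2)
    (by rw [one_lt_div (by linarith)]; linarith)
    (by rw [div_sub_one (by linarith), div_div, div_lt_iff₀ (by linarith)]; nlinarith)
  have e₀ : (3 * (d : ℝ) / (2 * d - 5) - 1 - 2 * ((d - 1) / 2)) / (2 * (3 * d / (2 * d - 5)))
      = -((d : ℝ) - 4) / 3 := by
    have : (d : ℝ) * 2 - 5 ≠ 0 := by linarith
    field_simp
    ring
  have e₁ : ((d : ℝ) / (d - 3) - 1 - 2 * ((d - 1) / 2)) / (2 * (d / (d - 3)))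
      = -((d : ℝ) - 4) / 2 := by
    field_simp [show (d - 3 : ℝ) ≠ 0 by linarith]
    ring
  simp only [e₀, e₁, one_div_div] at H₀ H₁
  refine ⟨max C₀ C₁, lt_max_of_lt_left hC₀, fun f hf h2f r ↦ ?_⟩
  have hf₁ : ContDiff ℝ 1 f := hf.of_le (by exact_mod_cast le_top)
  constructor
  · refine (H₀ f hf₁ h2f r).trans ?_
    gcongr
    exact le_max_left _ _
  · refine (H₁ f hf₁ h2f r).trans ?_
    gcongr
    exact le_max_right _ _
end
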